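/- arXiv:2306.07891 — 6 statements merged into one kernel-verified Lean document; each statement's English description precedes it below -/
import Mathlib

section
/- Let X and Y be finite sets of real numbers and r > 0. There exists a maximum matching M of the geometric bipartite graph on (X, Y) with threshold r that is non-crossing, i.e., for any two edges (x₁, y₁) and (x₂, y₂) of M, x₁ < x₂ implies y₁ < y₂. -/
/-- A matching of the geometric bipartite graph on `(X, Y)` with threshold `r`. -/
def IsGeomMatching (r : ℝ) (X Y : Finset ℝ) (M : Finset (ℝ × ℝ)) : Prop :=
  (∀ e ∈ M, e.1 ∈ X ∧ e.2 ∈ Y ∧ |e.1 - e.2| < r) ∧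
  (∀ e ∈ M, ∀ e' ∈ M, e.1 = e'.1 → e = e') ∧
  (∀ e ∈ M, ∀ e' ∈ M, e.2 = e'.2 → e = e')

/-- There is a maximum matching of the geometric bipartite graph on `(X, Y)` with
threshold `r` that is non-crossing. -/
theorem stmt1 (r : ℝ) (hr : 0 < r) (X Y : Finset ℝ) :
    ∃ M : Finset (ℝ × ℝ), IsGeomMatching r X Y M ∧
      (∀ M' : Finset (ℝ × ℝ), IsGeomMatching r X Y M' → M'.card ≤ M.card) ∧
      (∀ e ∈ M, ∀ e' ∈ M, e.1 < e'.1 → e.2 < e'.2) := by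
  classical
  -- the finite set of all matchings
  set S : Finset (Finset (ℝ × ℝ)) :=
    (X ×ˢ Y).powerset.filter (fun M => IsGeomMatching r X Y M) with hSdef
  have hmemS : ∀ M : Finset (ℝ × ℝ), M ∈ S ↔ IsGeomMatching r X Y M := by
    intro M
    constructor
    · intro h
      exact (Finset.mem_filter.mp h).2
    · intro h
      refine Finset.mem_filter.mpr ⟨Finset.mem_powerset.mpr ?_, h⟩
      intro e he
      have := h.1 e he
      exact Finset.mem_product.mpr ⟨this.1, this.2.1⟩
  have hempty : (∅ : Finset (ℝ × ℝ)) ∈ S := by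
    rw [hmemS]
    refine ⟨?_, ?_, ?_⟩ <;> intro e he <;> simp at he
  obtain ⟨M0, hM0S, hM0max⟩ := S.exists_max_image Finset.card ⟨∅, hempty⟩
  set T : Finset (Finset (ℝ × ℝ)) := S.filter (fun M => M.card = M0.card) with hTdef
  have hM0T : M0 ∈ T := Finset.mem_filter.mpr ⟨hM0S, rfl⟩
  obtain ⟨M, hMT, hMmin⟩ :=
    T.exists_min_image (fun M => ∑ p ∈ M, (p.1 - p.2) ^ 2) ⟨M0, hM0T⟩
  have hMS : M ∈ S := (Finset.mem_filter.mp hMT).1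
  have hMcard : M.card = M0.card := (Finset.mem_filter.mp hMT).2
  have hM : IsGeomMatching r X Y M := (hmemS M).mp hMS
  refine ⟨M, hM, ?_, ?_⟩
  · intro M' hM'
    have : M' ∈ S := (hmemS M').mpr hM'
    calc M'.card ≤ M0.card := hM0max M' this
    _ = M.card := hMcard.symm
  · -- non-crossing
    intro e he e' he' hlt
    by_contra hcon
    push_neg at hcon
    have hne : e ≠ e' := fun h => absurd (h ▸ hlt) (lt_irrefl _)
    have hne2 : e'.2 ≠ e.2 := by
      intro h
      exact hne (hM.2.2 e' he' e he h).symm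
    have hlt2 : e'.2 < e.2 := lt_of_le_of_ne hcon hne2
    set a := e.1 with ha
    set b := e.2 with hb
    set c := e'.1 with hc
    set d := e'.2 with hd
    have hab : |a - b| < r := (hM.1 e he).2.2
    have hcd : |c - d| < r := (hM.1 e' he').2.2
    have haX : a ∈ X := (hM.1 e he).1
    have hbY : b ∈ Y := (hM.1 e he).2.1
    have hcX : c ∈ X := (hM.1 e' he').1
    have hdY : d ∈ Y := (hM.1 e' he').2.1
    rw [abs_sub_lt_iff] at hab hcd
    have had : |a - d| < r := by
      rw [abs_sub_lt_iff]; constructor <;> linarith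
    have hcb : |c - b| < r := by
      rw [abs_sub_lt_iff]; constructor <;> linarith
    set p : ℝ × ℝ := (a, d) with hp
    set q : ℝ × ℝ := (c, b) with hq
    set R : Finset (ℝ × ℝ) := (M.erase e).erase e' with hR
    set M' : Finset (ℝ × ℝ) := insert p (insert q R) with hM'def
    have hpM : p ∉ M := by
      intro hpm
      have h1 := hM.2.1 p hpm e he rfl
      have h2 : d = b := by
        have := congrArg Prod.snd h1
        simpa [hp, ← hb] using this
      linarith
    have hqM : q ∉ M := by
      intro hqm
      have h1 := hM.2.1 q hqm e' he' rfl
      have h2 : b = d := by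
        have := congrArg Prod.snd h1
        simpa [hq, ← hd] using this
      linarith
    have hpq : p ≠ q := by
      intro h
      rw [hp, hq, Prod.ext_iff] at h
      simp at h
      linarith [h.1]
    have hRsub : R ⊆ M := (Finset.erase_subset _ _).trans (Finset.erase_subset _ _)
    have he'R : e' ∈ M.erase e := Finset.mem_erase.mpr ⟨fun h => hne h.symm, he'⟩
    -- membership characterization
    have hmemM' : ∀ f, f ∈ M' ↔ f = p ∨ f = q ∨ (f ∈ M ∧ f ≠ e ∧ f ≠ e') := by
      intro f
      simp only [hM'def, Finset.mem_insert, hR, Finset.mem_erase]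
      tauto
    -- M' is a matching
    have hM'match : IsGeomMatching r X Y M' := by
      refine ⟨?_, ?_, ?_⟩
      · intro f hf
        rcases (hmemM' f).mp hf with h | h | ⟨hfM, _, _⟩
        · subst h; exact ⟨haX, hdY, had⟩
        · subst h; exact ⟨hcX, hbY, hcb⟩
        · exact hM.1 f hfM
      · intro f hf g hg hfg
        rcases (hmemM' f).mp hf with h | h | ⟨hfM, hfe, hfe'⟩ <;>
          rcases (hmemM' g).mp hg with h2 | h2 | ⟨hgM, hge, hge'⟩
        · rw [h, h2]
        · exfalso; rw [h, h2] at hfg; simp [hp, hq] at hfg; linarith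
        · exfalso; rw [h] at hfg
          exact hge (hM.2.1 g hgM e he hfg.symm)
        · exfalso; rw [h, h2] at hfg; simp [hp, hq] at hfg; linarith
        · rw [h, h2]
        · exfalso; rw [h] at hfg
          exact hge' (hM.2.1 g hgM e' he' hfg.symm)
        · exfalso; rw [h2] at hfg
          exact hfe (hM.2.1 f hfM e he hfg)
        · exfalso; rw [h2] at hfg
          exact hfe' (hM.2.1 f hfM e' he' hfg)
        · exact hM.2.1 f hfM g hgM hfg
      · intro f hf g hg hfg
        rcases (hmemM' f).mp hf with h | h | ⟨hfM, hfe, hfe'⟩ <;>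
          rcases (hmemM' g).mp hg with h2 | h2 | ⟨hgM, hge, hge'⟩
        · rw [h, h2]
        · exfalso; rw [h, h2] at hfg; simp [hp, hq] at hfg; linarith
        · exfalso; rw [h] at hfg
          exact hge' (hM.2.2 g hgM e' he' hfg.symm)
        · exfalso; rw [h, h2] at hfg; simp [hp, hq] at hfg; linarith
        · rw [h, h2]
        · exfalso; rw [h] at hfg
          exact hge (hM.2.2 g hgM e he hfg.symm)
        · exfalso; rw [h2] at hfg
          exact hfe' (hM.2.2 f hfM e' he' hfg)
        · exfalso; rw [h2] at hfg
          exact hfe (hM.2.2 f hfM e he hfg)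
        · exact hM.2.2 f hfM g hgM hfg
    have hpR : p ∉ R := fun h => hpM (hRsub h)
    have hqR : q ∉ R := fun h => hqM (hRsub h)
    have hpqR : p ∉ insert q R := by
      simp only [Finset.mem_insert]
      rintro (h | h)
      · exact hpq h
      · exact hpR h
    have hcard2 : 2 ≤ M.card := Finset.one_lt_card.mpr ⟨e, he, e', he', hne⟩
    have hRcard : R.card = M.card - 2 := by
      rw [hR, Finset.card_erase_of_mem he'R, Finset.card_erase_of_mem he]
      omega
    have hM'card : M'.card = M.card := by
      rw [hM'def, Finset.card_insert_of_notMem hpqR, Finset.card_insert_of_notMem hqR,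
        hRcard]
      omega
    -- M' is in T
    have hM'T : M' ∈ T := by
      refine Finset.mem_filter.mpr ⟨(hmemS M').mpr hM'match, ?_⟩
      rw [hM'card, hMcard]
    have hle := hMmin M' hM'T
    -- compute sums
    have hsumR : ∑ x ∈ R, (x.1 - x.2) ^ 2 =
        (∑ x ∈ M, (x.1 - x.2) ^ 2) - (a - b) ^ 2 - (c - d) ^ 2 := by
      rw [hR, Finset.sum_erase_eq_sub he'R, Finset.sum_erase_eq_sub he]
    have hsumM' : ∑ x ∈ M', (x.1 - x.2) ^ 2 =
        (∑ x ∈ M, (x.1 - x.2) ^ 2) - (a - b) ^ 2 - (c - d) ^ 2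
          + (a - d) ^ 2 + (c - b) ^ 2 := by
      rw [hM'def, Finset.sum_insert hpqR, Finset.sum_insert hqR, hsumR]
      simp only [hp, hq]
      ring
    have hstrict : (a - d) ^ 2 + (c - b) ^ 2 < (a - b) ^ 2 + (c - d) ^ 2 := by
      nlinarith [mul_pos (sub_pos.mpr hlt) (sub_pos.mpr hlt2)]
    rw [hsumM'] at hle
    linarith
end

section
/- Let X = {x₁ < x₂ < … < x_n} and Y be finite sets of real numbers and r > 0. Consider the greedy matching constructed by processing x₁, …, x_n in increasing order and matching each x_i to the smallest not-yet-matched y ∈ Y with |x_i − y| < r, leaving x_i unmatched if no such y exists. This greedy matching is a maximum matching of the geometric bipartite graph on (X, Y) with threshold r. -/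
/-- The greedy matching: process the offline points `xs` in order, matching each one
to the smallest not-yet-matched `y ∈ S` with `|x - y| < r`, leaving it unmatched if
no such `y` exists. -/
noncomputable def greedyOffline (r : ℝ) : List ℝ → Finset ℝ → Finset (ℝ × ℝ)
  | [], _ => ∅
  | x :: xs, S =>
    if h : (S.filter fun y => |x - y| < r).Nonempty then
      insert (x, (S.filter fun y => |x - y| < r).min' h)
        (greedyOffline r xs (S.erase ((S.filter fun y => |x - y| < r).min' h)))
    else
      greedyOffline r xs S

/-!
Exchange argument. Let `x` be the smallest point of `X` and `m` its smallest neighbour in `Y`.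
If a matching pairs `x` with `y` and some other `x'` with `m`, then `x ≤ x'` and `m ≤ y` force
`|x' - y| < r`, so the two edges can be traded for `(x', y)`. Hence every matching of `(X, Y)` has
at most one edge more than some matching of `(X \ {x}, Y \ {m})`, and induction along the greedy
recursion finishes.
-/

lemma abs_sub_lt_of_le_of_le {x x' y y' r : ℝ} (hx : x ≤ x') (hy : y ≤ y')
    (hxy' : |x - y'| < r) (hx'y : |x' - y| < r) : |x' - y'| < r := by
  rw [abs_lt] at *
  constructor <;> linarith

namespace IsGeomMatching

variable {r : ℝ} {X X' Y Y' : Finset ℝ} {M M' : Finset (ℝ × ℝ)}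

lemma empty : IsGeomMatching r X Y ∅ := by
  simp [IsGeomMatching]

lemma of_subset (h : IsGeomMatching r X Y M) (hM' : M' ⊆ M) (hX : ∀ e ∈ M', e.1 ∈ X')
    (hY : ∀ e ∈ M', e.2 ∈ Y') : IsGeomMatching r X' Y' M' :=
  ⟨fun e he => ⟨hX e he, hY e he, (h.1 e (hM' he)).2.2⟩,
    fun e he e' he' => h.2.1 e (hM' he) e' (hM' he'),
    fun e he e' he' => h.2.2 e (hM' he) e' (hM' he')⟩

lemma mono (h : IsGeomMatching r X Y M) (hX : X ⊆ X') (hY : Y ⊆ Y') :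
    IsGeomMatching r X' Y' M :=
  h.of_subset subset_rfl (fun e he => hX (h.1 e he).1) (fun e he => hY (h.1 e he).2.1)

lemma insert_edge (h : IsGeomMatching r X Y M) {e : ℝ × ℝ} (he₁ : e.1 ∈ X) (he₂ : e.2 ∈ Y)
    (her : |e.1 - e.2| < r) (hfree : ∀ e' ∈ M, e'.1 ≠ e.1 ∧ e'.2 ≠ e.2) :
    IsGeomMatching r X Y (insert e M) := by
  simp only [IsGeomMatching, Finset.mem_insert]
  refine ⟨?_, ?_, ?_⟩
  · rintro a (rfl | ha)
    exacts [⟨he₁, he₂, her⟩, h.1 a ha]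
  · rintro a (rfl | ha) b (rfl | hb) hab
    · rfl
    · exact absurd hab.symm (hfree b hb).1
    · exact absurd hab (hfree a ha).1
    · exact h.2.1 a ha b hb hab
  · rintro a (rfl | ha) b (rfl | hb) hab
    · rfl
    · exact absurd hab.symm (hfree b hb).2
    · exact absurd hab (hfree a ha).2
    · exact h.2.2 a ha b hb hab

lemma card_filter_fst_eq_le_one (h : IsGeomMatching r X Y M) (a : ℝ) :
    (M.filter fun e => e.1 = a).card ≤ 1 :=
  Finset.card_le_one.mpr fun e he e' he' =>
    h.2.1 e (Finset.mem_filter.mp he).1 e' (Finset.mem_filter.mp he').1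
      ((Finset.mem_filter.mp he).2.trans (Finset.mem_filter.mp he').2.symm)

lemma card_filter_snd_eq_le_one (h : IsGeomMatching r X Y M) (b : ℝ) :
    (M.filter fun e => e.2 = b).card ≤ 1 :=
  Finset.card_le_one.mpr fun e he e' he' =>
    h.2.2 e (Finset.mem_filter.mp he).1 e' (Finset.mem_filter.mp he').1
      ((Finset.mem_filter.mp he).2.trans (Finset.mem_filter.mp he').2.symm)

lemma card_filter_fst_eq_or_snd_eq_le_two (h : IsGeomMatching r X Y M) (a b : ℝ) :
    (M.filter fun e => e.1 = a ∨ e.2 = b).card ≤ 2 := by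
  rw [Finset.filter_or]
  exact (Finset.card_union_le _ _).trans
    (add_le_add (h.card_filter_fst_eq_le_one a) (h.card_filter_snd_eq_le_one b))

lemma exists_card_le_succ_of_le_of_min_neighbor {x m : ℝ} (h : IsGeomMatching r (insert x X) Y M)
    (hX : ∀ x' ∈ X, x ≤ x') (hmin : ∀ y ∈ Y, |x - y| < r → m ≤ y) :
    ∃ M', IsGeomMatching r X (Y.erase m) M' ∧ M.card ≤ M'.card + 1 := by
  set M₀ := M.filter fun e => ¬(e.1 = x ∨ e.2 = m)
  have hM₀ : IsGeomMatching r X (Y.erase m) M₀ := by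
    refine h.of_subset (Finset.filter_subset _ _) (fun e he => ?_) (fun e he => ?_) <;>
      obtain ⟨he, hne⟩ := Finset.mem_filter.mp he <;> push Not at hne
    · exact (Finset.mem_insert.mp (h.1 e he).1).resolve_left hne.1
    · exact Finset.mem_erase.mpr ⟨hne.2, (h.1 e he).2.1⟩
  have hsplit : (M.filter fun e => e.1 = x ∨ e.2 = m).card + M₀.card = M.card :=
    Finset.card_filter_add_card_filter_not _
  by_cases hcross : ∃ e₁ ∈ M, ∃ e₂ ∈ M, e₁.1 = x ∧ e₂.2 = m ∧ e₁ ≠ e₂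
  · obtain ⟨e₁, he₁, e₂, he₂, hx, hm, hne⟩ := hcross
    have hy : e₁.2 ∈ Y := (h.1 e₁ he₁).2.1
    have hxy : |x - e₁.2| < r := hx ▸ (h.1 e₁ he₁).2.2
    have hx'm : |e₂.1 - m| < r := hm ▸ (h.1 e₂ he₂).2.2
    have hym : e₁.2 ≠ m := fun h' => hne (h.2.2 e₁ he₁ e₂ he₂ (h'.trans hm.symm))
    have hx' : e₂.1 ∈ X := (Finset.mem_insert.mp (h.1 e₂ he₂).1).resolve_left
      fun h' => hne (h.2.1 e₁ he₁ e₂ he₂ (hx.trans h'.symm))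
    have hfree : ∀ e ∈ M₀, e.1 ≠ e₂.1 ∧ e.2 ≠ e₁.2 := by
      intro e he
      obtain ⟨he, hne'⟩ := Finset.mem_filter.mp he
      push Not at hne'
      exact ⟨fun h' => hne'.2 (h.2.1 e he e₂ he₂ h' ▸ hm),
        fun h' => hne'.1 (h.2.2 e he e₁ he₁ h' ▸ hx)⟩
    refine ⟨insert (e₂.1, e₁.2) M₀, hM₀.insert_edge hx' (Finset.mem_erase.mpr ⟨hym, hy⟩)
      (abs_sub_lt_of_le_of_le (hX _ hx') (hmin _ hy hxy) hxy hx'm) hfree, ?_⟩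
    rw [Finset.card_insert_of_notMem (a := (e₂.1, e₁.2)) fun hmem => (hfree _ hmem).1 rfl]
    have := h.card_filter_fst_eq_or_snd_eq_le_two x m
    omega
  · refine ⟨M₀, hM₀, ?_⟩
    have hle : (M.filter fun e => e.1 = x ∨ e.2 = m).card ≤ 1 := by
      refine Finset.card_le_one.mpr fun a ha b hb => ?_
      obtain ⟨ha, ha' | ha'⟩ := Finset.mem_filter.mp ha <;>
        obtain ⟨hb, hb' | hb'⟩ := Finset.mem_filter.mp hb
      · exact h.2.1 a ha b hb (ha'.trans hb'.symm)
      · by_contra hab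
        exact hcross ⟨a, ha, b, hb, ha', hb', hab⟩
      · by_contra hab
        exact hcross ⟨b, hb, a, ha, hb', ha', Ne.symm hab⟩
      · exact h.2.2 a ha b hb (ha'.trans hb'.symm)
    omega

end IsGeomMatching

theorem isGeomMatching_greedyOffline {r : ℝ} {xs : List ℝ} (hxs : xs.Nodup) (S : Finset ℝ) :
    IsGeomMatching r xs.toFinset S (greedyOffline r xs S) := by
  induction xs generalizing S with
  | nil => exact IsGeomMatching.empty
  | cons x xs ih =>
    obtain ⟨hx, hxs⟩ := List.nodup_cons.mp hxs
    rw [List.toFinset_cons]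
    have hsub : xs.toFinset ⊆ insert x xs.toFinset := Finset.subset_insert _ _
    by_cases hN : (S.filter fun y => |x - y| < r).Nonempty
    · set m := (S.filter fun y => |x - y| < r).min' hN
      obtain ⟨hmS, hxm⟩ := Finset.mem_filter.mp (Finset.min'_mem _ hN)
      have hG := ih hxs (S.erase m)
      rw [greedyOffline, dif_pos hN]
      refine (hG.mono hsub (Finset.erase_subset _ _)).insert_edge (Finset.mem_insert_self _ _)
        hmS hxm fun e he => ⟨fun (h' : e.1 = x) => hx (List.mem_toFinset.mp (h' ▸ (hG.1 e he).1)),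
          Finset.ne_of_mem_erase (hG.1 e he).2.1⟩
    · rw [greedyOffline, dif_neg hN]
      exact (ih hxs S).mono hsub subset_rfl

theorem card_le_card_greedyOffline {r : ℝ} {xs : List ℝ} (hxs : xs.Pairwise (· < ·))
    {S : Finset ℝ} {M : Finset (ℝ × ℝ)} (hM : IsGeomMatching r xs.toFinset S M) :
    M.card ≤ (greedyOffline r xs S).card := by
  induction xs generalizing S M with
  | nil =>
    have : M = ∅ := Finset.eq_empty_of_forall_notMem fun e he => by simpa using (hM.1 e he).1
    simp [this]
  | cons x xs ih =>
    obtain ⟨hx, hxs⟩ := List.pairwise_cons.mp hxs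
    rw [List.toFinset_cons] at hM
    by_cases hN : (S.filter fun y => |x - y| < r).Nonempty
    · set m := (S.filter fun y => |x - y| < r).min' hN
      have hmin : ∀ y ∈ S, |x - y| < r → m ≤ y := fun y hy hxy =>
        Finset.min'_le _ _ (Finset.mem_filter.mpr ⟨hy, hxy⟩)
      obtain ⟨M', hM', hcard⟩ := hM.exists_card_le_succ_of_le_of_min_neighbor
        (fun x' h' => (hx x' (List.mem_toFinset.mp h')).le) hmin
      have hG := isGeomMatching_greedyOffline (r := r) hxs.nodup (S.erase m)
      rw [greedyOffline, dif_pos hN, Finset.card_insert_of_notMem fun hmem =>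
        lt_irrefl x (hx x (List.mem_toFinset.mp (hG.1 _ hmem).1))]
      exact hcard.trans (Nat.succ_le_succ (ih hxs hM'))
    · rw [greedyOffline, dif_neg hN]
      refine ih hxs (hM.of_subset subset_rfl (fun e he => ?_) (fun e he => (hM.1 e he).2.1))
      obtain ⟨hxe, hy, hxy⟩ := hM.1 e he
      exact (Finset.mem_insert.mp hxe).resolve_left
        fun h' => hN ⟨e.2, Finset.mem_filter.mpr ⟨hy, h' ▸ hxy⟩⟩

theorem stmt2_general (r : ℝ) (X Y : Finset ℝ) (xs : List ℝ)
    (hsort : xs.Pairwise (· < ·)) (hX : xs.toFinset = X) :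
    IsGeomMatching r X Y (greedyOffline r xs Y) ∧
    ∀ M : Finset (ℝ × ℝ), IsGeomMatching r X Y M →
      M.card ≤ (greedyOffline r xs Y).card := by
  subst hX
  exact ⟨isGeomMatching_greedyOffline hsort.nodup Y, fun _ => card_le_card_greedyOffline hsort⟩

/-- The greedy matching, processing the points of `X` in increasing order, is a
maximum matching of the geometric bipartite graph on `(X, Y)` with threshold `r`. -/
theorem stmt2 (r : ℝ) (hr : 0 < r) (X Y : Finset ℝ) (xs : List ℝ)
    (hsort : xs.Pairwise (· < ·)) (hX : xs.toFinset = X) :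
    IsGeomMatching r X Y (greedyOffline r xs Y) ∧
    ∀ M : Finset (ℝ × ℝ), IsGeomMatching r X Y M →
      M.card ≤ (greedyOffline r xs Y).card :=
  stmt2_general r X Y xs hsort hX
end

section
/- Let r ∈ (0,∞], let X be a finite set of real numbers, let x₀ ∈ ℝ \ X, and let y₁, …, y_m be a finite sequence of real numbers such that for all distinct u, u' ∈ X ∪ {x₀} and every j ≤ m one has |u − y_j| ≠ |u' − y_j| (so in every run the nearest free offline point is unique). Let s(X) and s(X ∪ {x₀}) denote the number of online points matched when the greedy algorithm closest with threshold r is run with offline set X, respectively X ∪ {x₀}, on the same arrival sequence y₁, …, y_m. Then s(X) ≤ s(X ∪ {x₀}) ≤ s(X) + 1. -/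
open MeasureTheory
open scoped ENNReal

/-- One step of the greedy algorithm `closest` with threshold `r ∈ (0, ∞]`. -/
noncomputable def closestStep (r : ℝ≥0∞) (S : Finset ℝ) (y : ℝ) : Finset ℝ × Option ℝ :=
  if h : (S.filter fun x => ENNReal.ofReal |x - y| < r).Nonempty then
    let x0 := (((S.filter fun x => ENNReal.ofReal |x - y| < r)).filter
        (fun x => |x - y| =
          (S.filter fun x => ENNReal.ofReal |x - y| < r).inf' h fun x => |x - y|)).min'
      (by
        obtain ⟨b, hb, he⟩ :=
          Finset.exists_mem_eq_inf' h (fun x : ℝ => |x - y|)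
        exact ⟨b, Finset.mem_filter.2 ⟨hb, he.symm⟩⟩)
    (S.erase x0, some x0)
  else (S, none)

/-- The state of the greedy algorithm `closest` after the first `m` arrivals:
free offline points, number of matched online points, total matching length. -/
noncomputable def closestState (r : ℝ≥0∞) (X : Finset ℝ) (y : ℕ → ℝ) : ℕ → Finset ℝ × ℕ × ℝ
  | 0 => (X, 0, 0)
  | m + 1 =>
    match closestStep r (closestState r X y m).1 (y m) with
    | (S', none) => (S', (closestState r X y m).2.1, (closestState r X y m).2.2)
    | (S', some x) =>
        (S', (closestState r X y m).2.1 + 1, (closestState r X y m).2.2 + |x - y m|)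

/-- Number of online points matched by `closest` among the first `m` arrivals. -/
noncomputable def closestMatchedCount (r : ℝ≥0∞) (X : Finset ℝ) (y : ℕ → ℝ) (m : ℕ) : ℕ :=
  (closestState r X y m).2.1

lemma stepNone (r : ℝ≥0∞) (S : Finset ℝ) (y : ℝ)
    (h : ¬ (S.filter fun x => ENNReal.ofReal |x - y| < r).Nonempty) :
    closestStep r S y = (S, none) := by
  rw [closestStep, dif_neg h]

lemma stepSome (r : ℝ≥0∞) (S : Finset ℝ) (y : ℝ)
    (h : (S.filter fun x => ENNReal.ofReal |x - y| < r).Nonempty) :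
    ∃ w ∈ S.filter fun x => ENNReal.ofReal |x - y| < r,
      closestStep r S y = (S.erase w, some w) ∧
      (∀ u ∈ S.filter fun x => ENNReal.ofReal |x - y| < r, |w - y| ≤ |u - y|) ∧
      (∀ u ∈ S.filter fun x => ENNReal.ofReal |x - y| < r, |u - y| = |w - y| → w ≤ u) := by
  rw [closestStep, dif_pos h]
  set F := S.filter fun x => ENNReal.ofReal |x - y| < r with hF
  set d := F.inf' h fun x => |x - y| with hd
  set E := F.filter (fun x => |x - y| = d) with hE
  have hEne : E.Nonempty := by
    obtain ⟨b, hb, he⟩ := Finset.exists_mem_eq_inf' h (fun x : ℝ => |x - y|)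
    exact ⟨b, Finset.mem_filter.2 ⟨hb, he.symm⟩⟩
  set w := E.min' hEne with hw
  have hwE : w ∈ E := E.min'_mem hEne
  have hwF : w ∈ F := (Finset.mem_filter.1 hwE).1
  have hwd : |w - y| = d := (Finset.mem_filter.1 hwE).2
  refine ⟨w, hwF, rfl, ?_, ?_⟩
  · intro u hu
    rw [hwd]
    exact Finset.inf'_le _ hu
  · intro u hu hud
    exact E.min'_le u (Finset.mem_filter.2 ⟨hu, by rw [hud, hwd]⟩)

lemma stepRel (r : ℝ≥0∞) (S : Finset ℝ) (z : ℝ) (hz : z ∉ S) (y : ℝ) :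
    (closestStep r (insert z S) y = (insert z S, none) ∧ closestStep r S y = (S, none)) ∨
    (closestStep r S y = (S, none) ∧ closestStep r (insert z S) y = (S, some z)) ∨
    (∃ x ∈ S, closestStep r S y = (S.erase x, some x) ∧
      (closestStep r (insert z S) y = (insert z (S.erase x), some x) ∨
       closestStep r (insert z S) y = (S, some z))) := by
  classical
  by_cases hpz : ENNReal.ofReal |z - y| < r
  · have hF' : ((insert z S).filter fun x => ENNReal.ofReal |x - y| < r)
        = insert z (S.filter fun x => ENNReal.ofReal |x - y| < r) := by
      rw [Finset.filter_insert, if_pos hpz]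
    have hF'ne : ((insert z S).filter fun x => ENNReal.ofReal |x - y| < r).Nonempty := by
      rw [hF']; exact ⟨z, Finset.mem_insert_self _ _⟩
    obtain ⟨w', hw'F, hstep', hw'min, hw'le⟩ := stepSome r (insert z S) y hF'ne
    rw [hF'] at hw'F hw'min hw'le
    by_cases hF : (S.filter fun x => ENNReal.ofReal |x - y| < r).Nonempty
    · obtain ⟨w, hwF, hstep, hwmin, hwle⟩ := stepSome r S y hF
      have hwS : w ∈ S := Finset.mem_of_mem_filter _ hwF
      by_cases hwz : w' = z
      · refine Or.inr (Or.inr ⟨w, hwS, hstep, Or.inr ?_⟩)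
        rw [hstep', hwz, Finset.erase_insert hz]
      · have hw'F2 : w' ∈ S.filter fun x => ENNReal.ofReal |x - y| < r :=
          (Finset.mem_insert.1 hw'F).resolve_left hwz
        have heq : |w' - y| = |w - y| :=
          le_antisymm (hw'min w (Finset.mem_insert_of_mem hwF)) (hwmin w' hw'F2)
        have hww' : w' = w :=
          le_antisymm (hw'le w (Finset.mem_insert_of_mem hwF) heq.symm) (hwle w' hw'F2 heq)
        refine Or.inr (Or.inr ⟨w, hwS, hstep, Or.inl ?_⟩)
        rw [hstep', hww', Finset.erase_insert_of_ne (fun h => hz (by rw [h]; exact hwS))]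
    · have hw'z : w' = z := by
        rcases Finset.mem_insert.1 hw'F with h | h
        · exact h
        · exact absurd ⟨w', h⟩ hF
      refine Or.inr (Or.inl ⟨stepNone r S y hF, ?_⟩)
      rw [hstep', hw'z, Finset.erase_insert hz]
  · have hF' : ((insert z S).filter fun x => ENNReal.ofReal |x - y| < r)
        = (S.filter fun x => ENNReal.ofReal |x - y| < r) := by
      rw [Finset.filter_insert, if_neg hpz]
    by_cases hF : (S.filter fun x => ENNReal.ofReal |x - y| < r).Nonempty
    · have hF'ne : ((insert z S).filter fun x => ENNReal.ofReal |x - y| < r).Nonempty := by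
        rw [hF']; exact hF
      obtain ⟨w, hwF, hstep, hwmin, hwle⟩ := stepSome r S y hF
      obtain ⟨w', hw'F, hstep', hw'min, hw'le⟩ := stepSome r (insert z S) y hF'ne
      rw [hF'] at hw'F hw'min hw'le
      have hwS : w ∈ S := Finset.mem_of_mem_filter _ hwF
      have heq : |w' - y| = |w - y| := le_antisymm (hw'min w hwF) (hwmin w' hw'F)
      have hww' : w' = w := le_antisymm (hw'le w hwF heq.symm) (hwle w' hw'F heq)
      refine Or.inr (Or.inr ⟨w, hwS, hstep, Or.inl ?_⟩)
      rw [hstep', hww', Finset.erase_insert_of_ne (fun h => hz (by rw [h]; exact hwS))]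
    · exact Or.inl ⟨stepNone r (insert z S) y (by rw [hF']; exact hF), stepNone r S y hF⟩

lemma state_succ_none (r : ℝ≥0∞) (X : Finset ℝ) (y : ℕ → ℝ) (m : ℕ) (A : Finset ℝ)
    (h : closestStep r (closestState r X y m).1 (y m) = (A, none)) :
    closestState r X y (m + 1) = (A, (closestState r X y m).2.1, (closestState r X y m).2.2) := by
  simp [closestState, h]

lemma state_succ_some (r : ℝ≥0∞) (X : Finset ℝ) (y : ℕ → ℝ) (m : ℕ) (A : Finset ℝ) (x : ℝ)
    (h : closestStep r (closestState r X y m).1 (y m) = (A, some x)) :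
    closestState r X y (m + 1)
      = (A, (closestState r X y m).2.1 + 1, (closestState r X y m).2.2 + |x - y m|) := by
  simp [closestState, h]

lemma invar (r : ℝ≥0∞) (X : Finset ℝ) (x₀ : ℝ) (hx₀ : x₀ ∉ X) (y : ℕ → ℝ) : ∀ m : ℕ,
    ((closestState r (insert x₀ X) y m).1 = (closestState r X y m).1 ∧
      (closestState r (insert x₀ X) y m).2.1 = (closestState r X y m).2.1 + 1) ∨
    (∃ z ∉ (closestState r X y m).1,
      (closestState r (insert x₀ X) y m).1 = insert z (closestState r X y m).1 ∧
      (closestState r (insert x₀ X) y m).2.1 = (closestState r X y m).2.1) := by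
  intro m
  induction m with
  | zero => exact Or.inr ⟨x₀, hx₀, rfl, rfl⟩
  | succ m ih =>
    set S := (closestState r X y m).1 with hS
    set S' := (closestState r (insert x₀ X) y m).1 with hS'
    rcases ih with ⟨hset, hcnt⟩ | ⟨z, hzS, hset, hcnt⟩
    · -- equal free sets: same step on both sides
      rcases hstep : closestStep r S (y m) with ⟨A, o⟩
      have hstep' : closestStep r S' (y m) = (A, o) := by rw [hset]; exact hstep
      cases o with
      | none =>
        rw [state_succ_none r X y m A hstep, state_succ_none r (insert x₀ X) y m A hstep']
        exact Or.inl ⟨rfl, hcnt⟩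
      | some x =>
        rw [state_succ_some r X y m A x hstep, state_succ_some r (insert x₀ X) y m A x hstep']
        exact Or.inl ⟨rfl, by simp [hcnt]⟩
    · -- S' = insert z S
      rcases stepRel r S z hzS (y m) with ⟨h1, h2⟩ | ⟨h1, h2⟩ | ⟨x, hxS, h1, h2⟩
      · have h1' : closestStep r S' (y m) = (S', none) := by rw [hset]; exact h1
        rw [state_succ_none r X y m S h2, state_succ_none r (insert x₀ X) y m S' h1']
        exact Or.inr ⟨z, hzS, hset, hcnt⟩
      · have h2' : closestStep r S' (y m) = (S, some z) := by rw [hset]; exact h2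
        rw [state_succ_none r X y m S h1, state_succ_some r (insert x₀ X) y m S z h2']
        exact Or.inl ⟨rfl, by simp [hcnt]⟩
      · rcases h2 with h2 | h2
        · have h2' : closestStep r S' (y m) = (insert z (S.erase x), some x) := by
            rw [hset]; exact h2
          rw [state_succ_some r X y m _ x h1,
            state_succ_some r (insert x₀ X) y m _ x h2']
          exact Or.inr ⟨z, fun h => hzS (Finset.mem_of_mem_erase h), rfl, by simp [hcnt]⟩
        · have h2' : closestStep r S' (y m) = (S, some z) := by rw [hset]; exact h2
          rw [state_succ_some r X y m _ x h1,
            state_succ_some r (insert x₀ X) y m _ z h2']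
          refine Or.inr ⟨x, Finset.notMem_erase x S, ?_, by simp [hcnt]⟩
          simp [Finset.insert_erase hxS]


/-- Adding one offline point changes the number of points matched by `closest`
by at most one (and cannot decrease it), provided all relevant distances are
distinct so that the nearest free offline point is always unique. -/
theorem stmt9 (r : ℝ≥0∞) (hr : 0 < r) (X : Finset ℝ) (x₀ : ℝ) (hx₀ : x₀ ∉ X)
    (m : ℕ) (y : ℕ → ℝ)
    (hgen : ∀ u ∈ insert x₀ X, ∀ u' ∈ insert x₀ X, u ≠ u' →
      ∀ j < m, |u - y j| ≠ |u' - y j|) :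
    closestMatchedCount r X y m ≤ closestMatchedCount r (insert x₀ X) y m ∧
    closestMatchedCount r (insert x₀ X) y m ≤ closestMatchedCount r X y m + 1 := by
  rcases invar r X x₀ hx₀ y m with ⟨_, h⟩ | ⟨_, _, _, h⟩ <;>
    simp [closestMatchedCount, h]
end

section
/- Fix c > 0. There exists a constant L > 0, depending only on c, with the following property. For every integer m ≥ 1, every real k > 0, every r ≥ 0 and every r̃ ∈ [0, 2c], define Φ : ℝ^m → ℝ^m by Φ_ℓ(y) = −min(ℓ/k, 2c)·y_ℓ − ((Σ_{ℓ'=1}^{m} min(ℓ'/k, 2c)·y_{ℓ'} + r̃)/(Σ_{ℓ'=1}^{m} y_{ℓ'} + r))·y_ℓ + (Σ_{ℓ'=1}^{ℓ−1} min(ℓ'/k, 2c)·y_{ℓ'}·y_{ℓ−ℓ'})/(Σ_{ℓ'=1}^{m} y_{ℓ'} + r), for ℓ = 1, …, m. Then on the domain D = { y ∈ ℝ^m : y_ℓ ≥ 0 for all ℓ, and (1/2)e^{−4c} ≤ Σ_{ℓ=1}^m y_ℓ ≤ 2 }, the map Φ is L-Lipschitz with respect to the ℓ¹ norm: for all y,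 y' ∈ D, Σ_{ℓ=1}^m |Φ_ℓ(y) − Φ_ℓ(y')| ≤ L·Σ_{ℓ=1}^m |y_ℓ − y'_ℓ|. -/
/-- The map `Φ : ℝ^m → ℝ^m` (vectors indexed by `ℓ ∈ {1, …, m}`, encoded as
functions `ℕ → ℝ` of which only the coordinates `1, …, m` are relevant). -/
noncomputable def PhiMap (c k r rt : ℝ) (m : ℕ) (y : ℕ → ℝ) (ℓ : ℕ) : ℝ :=
  -(min ((ℓ : ℝ) / k) (2 * c)) * y ℓ
    - ((∑ ℓ' ∈ Finset.Icc 1 m, min ((ℓ' : ℝ) / k) (2 * c) * y ℓ') + rt) /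
        ((∑ ℓ' ∈ Finset.Icc 1 m, y ℓ') + r) * y ℓ
    + (∑ ℓ' ∈ Finset.Ico 1 ℓ, min ((ℓ' : ℝ) / k) (2 * c) * y ℓ' * y (ℓ - ℓ')) /
        ((∑ ℓ' ∈ Finset.Icc 1 m, y ℓ') + r)


lemma div_diff_bound {ε b b' d d' : ℝ} (hε : 0 < ε) (hd : ε ≤ d) (hd' : ε ≤ d') :
    |b / d - b' / d'| ≤ |b - b'| / ε + |b'| * |d - d'| / ε ^ 2 := by
  have hd0 : 0 < d := hε.trans_le hd
  have hd'0 : 0 < d' := hε.trans_le hd'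
  have h1 : b / d - b' / d' = (b - b') / d + b' * (d' - d) / (d * d') := by
    field_simp; ring
  rw [h1]
  refine (abs_add_le _ _).trans (add_le_add ?_ ?_)
  · rw [abs_div, abs_of_pos hd0]
    gcongr
  · rw [abs_div, abs_mul, abs_of_pos (mul_pos hd0 hd'0), abs_sub_comm d' d]
    gcongr
    nlinarith

lemma conv_sum_le (m : ℕ) (f g : ℕ → ℝ) (hf : ∀ i ∈ Finset.Icc 1 m, 0 ≤ f i)
    (hg : ∀ i ∈ Finset.Icc 1 m, 0 ≤ g i) :
    ∑ ℓ ∈ Finset.Icc 1 m, ∑ ℓ' ∈ Finset.Ico 1 ℓ, f ℓ' * g (ℓ - ℓ') ≤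
      (∑ i ∈ Finset.Icc 1 m, f i) * (∑ j ∈ Finset.Icc 1 m, g j) := by
  rw [Finset.sum_sigma', Finset.sum_mul_sum, ← Finset.sum_product']
  set T := (Finset.Icc 1 m).sigma fun ℓ => Finset.Ico 1 ℓ with hT
  have hmem : ∀ p : (_ : ℕ) × ℕ, p ∈ T → 1 ≤ p.2 ∧ p.2 < p.1 ∧ p.1 ≤ m := by
    intro p hp
    simp only [hT, Finset.mem_sigma, Finset.mem_Icc, Finset.mem_Ico] at hp
    omega
  have hinj : ∀ p ∈ T, ∀ q ∈ T, (fun p : (_ : ℕ) × ℕ => (p.2, p.1 - p.2)) p =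
      (fun p : (_ : ℕ) × ℕ => (p.2, p.1 - p.2)) q → p = q := by
    intro p hp q hq h
    obtain ⟨h1, h2, h3⟩ := hmem p hp
    obtain ⟨h1', h2', h3'⟩ := hmem q hq
    simp only [Prod.mk.injEq] at h
    have : p.1 = q.1 := by omega
    cases p; cases q; simp_all
  have himg : Finset.image (fun p : (_ : ℕ) × ℕ => (p.2, p.1 - p.2)) T ⊆
      Finset.Icc 1 m ×ˢ Finset.Icc 1 m := by
    intro q hq
    simp only [Finset.mem_image] at hq
    obtain ⟨p, hp, rfl⟩ := hq
    obtain ⟨h1, h2, h3⟩ := hmem p hp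
    simp only [Finset.mem_product, Finset.mem_Icc]
    omega
  calc ∑ p ∈ T, f p.2 * g (p.1 - p.2)
      = ∑ q ∈ Finset.image (fun p : (_ : ℕ) × ℕ => (p.2, p.1 - p.2)) T,
          f q.1 * g q.2 := by
        rw [Finset.sum_image hinj]
    _ ≤ ∑ q ∈ Finset.Icc 1 m ×ˢ Finset.Icc 1 m, f q.1 * g q.2 := by
        refine Finset.sum_le_sum_of_subset_of_nonneg himg ?_
        intro q hq _
        simp only [Finset.mem_product] at hq
        exact mul_nonneg (hf _ hq.1) (hg _ hq.2)

def convB (a z : ℕ → ℝ) (ℓ : ℕ) : ℝ := ∑ ℓ' ∈ Finset.Ico 1 ℓ, a ℓ' * z ℓ' * z (ℓ - ℓ')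

set_option maxHeartbeats 1000000 in
lemma key (c ε : ℝ) (hc : 0 < c) (hε : 0 < ε) (m : ℕ) (a : ℕ → ℝ)
    (ha0 : ∀ ℓ, 0 ≤ a ℓ) (ha2 : ∀ ℓ, a ℓ ≤ 2 * c) (r rt : ℝ) (hr : 0 ≤ r)
    (hrt0 : 0 ≤ rt) (hrt : rt ≤ 2 * c) (y y' : ℕ → ℝ)
    (hy : ∀ ℓ ∈ Finset.Icc 1 m, 0 ≤ y ℓ)
    (hyl : ε ≤ ∑ ℓ ∈ Finset.Icc 1 m, y ℓ) (hyu : (∑ ℓ ∈ Finset.Icc 1 m, y ℓ) ≤ 2)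
    (hy' : ∀ ℓ ∈ Finset.Icc 1 m, 0 ≤ y' ℓ)
    (hy'l : ε ≤ ∑ ℓ ∈ Finset.Icc 1 m, y' ℓ) (hy'u : (∑ ℓ ∈ Finset.Icc 1 m, y' ℓ) ≤ 2) :
    ∑ ℓ ∈ Finset.Icc 1 m,
      |(-(a ℓ) * y ℓ
          - ((∑ ℓ' ∈ Finset.Icc 1 m, a ℓ' * y ℓ') + rt) /
              ((∑ ℓ' ∈ Finset.Icc 1 m, y ℓ') + r) * y ℓ
          + convB a y ℓ / ((∑ ℓ' ∈ Finset.Icc 1 m, y ℓ') + r))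
        - (-(a ℓ) * y' ℓ
          - ((∑ ℓ' ∈ Finset.Icc 1 m, a ℓ' * y' ℓ') + rt) /
              ((∑ ℓ' ∈ Finset.Icc 1 m, y' ℓ') + r) * y' ℓ
          + convB a y' ℓ / ((∑ ℓ' ∈ Finset.Icc 1 m, y' ℓ') + r))| ≤
      (2 * c + 18 * c / ε + 20 * c / ε ^ 2) * ∑ ℓ ∈ Finset.Icc 1 m, |y ℓ - y' ℓ| := by
  set I := Finset.Icc 1 m with hI
  set S := ∑ ℓ ∈ I, y ℓ with hS
  set S' := ∑ ℓ ∈ I, y' ℓ with hS'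
  set A := ∑ ℓ ∈ I, a ℓ * y ℓ with hA
  set A' := ∑ ℓ ∈ I, a ℓ * y' ℓ with hA'
  set N := ∑ ℓ ∈ I, |y ℓ - y' ℓ| with hN
  clear_value S S' A A' N
  have hN0 : 0 ≤ N := by
    rw [hN]; exact Finset.sum_nonneg fun ℓ _ => abs_nonneg _
  have hS0 : 0 ≤ S := hε.le.trans hyl
  have hS'0 : 0 ≤ S' := hε.le.trans hy'l
  have hDn : ε ≤ S + r := by linarith
  have hDn' : ε ≤ S' + r := by linarith
  have hA0 : 0 ≤ A := by
    rw [hA]; exact Finset.sum_nonneg fun ℓ hℓ => mul_nonneg (ha0 ℓ) (hy ℓ hℓ)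
  have hA'0 : 0 ≤ A' := by
    rw [hA']; exact Finset.sum_nonneg fun ℓ hℓ => mul_nonneg (ha0 ℓ) (hy' ℓ hℓ)
  have hA'4 : A' ≤ 4 * c := by
    have h := Finset.sum_le_sum fun ℓ hℓ =>
      mul_le_mul_of_nonneg_right (ha2 ℓ) (hy' ℓ hℓ)
    rw [← Finset.mul_sum] at h
    calc A' ≤ 2 * c * S' := by rw [hA', hS']; exact h
      _ ≤ 4 * c := by nlinarith
  have hAd : |A - A'| ≤ 2 * c * N := by
    rw [hA, hA', ← Finset.sum_sub_distrib]
    refine (Finset.abs_sum_le_sum_abs _ _).trans ?_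
    rw [hN, Finset.mul_sum]
    refine Finset.sum_le_sum fun ℓ hℓ => ?_
    rw [← mul_sub, abs_mul, abs_of_nonneg (ha0 ℓ)]
    exact mul_le_mul_of_nonneg_right (ha2 ℓ) (abs_nonneg _)
  have hSd : |S - S'| ≤ N := by
    rw [hS, hS', hN, ← Finset.sum_sub_distrib]
    exact Finset.abs_sum_le_sum_abs _ _
  have hsub : ∀ ℓ ∈ I, ∀ ℓ' ∈ Finset.Ico 1 ℓ, ℓ' ∈ I ∧ ℓ - ℓ' ∈ I := by
    intro ℓ hℓ ℓ' hℓ'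
    simp only [hI, Finset.mem_Icc, Finset.mem_Ico] at *
    omega
  have hB'0 : ∀ ℓ ∈ I, 0 ≤ convB a y' ℓ := by
    intro ℓ hℓ
    refine Finset.sum_nonneg fun ℓ' hℓ' => ?_
    obtain ⟨h1, h2⟩ := hsub ℓ hℓ ℓ' hℓ'
    exact mul_nonneg (mul_nonneg (ha0 ℓ') (hy' _ h1)) (hy' _ h2)
  -- sum of |B - B'|
  have hBd : ∑ ℓ ∈ I, |convB a y ℓ - convB a y' ℓ| ≤
      2 * c * (N * S) + 2 * c * (S' * N) := by
    have step : ∀ ℓ ∈ I, |convB a y ℓ - convB a y' ℓ| ≤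
        (∑ ℓ' ∈ Finset.Ico 1 ℓ, 2 * c * (|y ℓ' - y' ℓ'| * y (ℓ - ℓ'))) +
        (∑ ℓ' ∈ Finset.Ico 1 ℓ, 2 * c * (y' ℓ' * |y (ℓ - ℓ') - y' (ℓ - ℓ')|)) := by
      intro ℓ hℓ
      rw [← Finset.sum_add_distrib]
      rw [convB, convB, ← Finset.sum_sub_distrib]
      refine (Finset.abs_sum_le_sum_abs _ _).trans (Finset.sum_le_sum fun ℓ' hℓ' => ?_)
      obtain ⟨h1, h2⟩ := hsub ℓ hℓ ℓ' hℓ'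
      have e : a ℓ' * y ℓ' * y (ℓ - ℓ') - a ℓ' * y' ℓ' * y' (ℓ - ℓ') =
          a ℓ' * ((y ℓ' - y' ℓ') * y (ℓ - ℓ') + y' ℓ' * (y (ℓ - ℓ') - y' (ℓ - ℓ'))) := by
        ring
      rw [e, abs_mul, abs_of_nonneg (ha0 ℓ')]
      have h3 : |(y ℓ' - y' ℓ') * y (ℓ - ℓ') + y' ℓ' * (y (ℓ - ℓ') - y' (ℓ - ℓ'))| ≤
          |y ℓ' - y' ℓ'| * y (ℓ - ℓ') + y' ℓ' * |y (ℓ - ℓ') - y' (ℓ - ℓ')| := by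
        refine (abs_add_le _ _).trans ?_
        rw [abs_mul, abs_mul, abs_of_nonneg (hy _ h2), abs_of_nonneg (hy' _ h1)]
      have h4 : 0 ≤ |y ℓ' - y' ℓ'| * y (ℓ - ℓ') + y' ℓ' * |y (ℓ - ℓ') - y' (ℓ - ℓ')| :=
        add_nonneg (mul_nonneg (abs_nonneg _) (hy _ h2))
          (mul_nonneg (hy' _ h1) (abs_nonneg _))
      calc a ℓ' * |(y ℓ' - y' ℓ') * y (ℓ - ℓ') + y' ℓ' * (y (ℓ - ℓ') - y' (ℓ - ℓ'))|
          ≤ (2 * c) * (|y ℓ' - y' ℓ'| * y (ℓ - ℓ') + y' ℓ' * |y (ℓ - ℓ') - y' (ℓ - ℓ')|) :=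
            mul_le_mul (ha2 ℓ') h3 (abs_nonneg _) (by linarith)
        _ = 2 * c * (|y ℓ' - y' ℓ'| * y (ℓ - ℓ')) +
            2 * c * (y' ℓ' * |y (ℓ - ℓ') - y' (ℓ - ℓ')|) := by ring
    refine (Finset.sum_le_sum step).trans ?_
    rw [Finset.sum_add_distrib]
    have c1 : ∑ ℓ ∈ I, ∑ ℓ' ∈ Finset.Ico 1 ℓ, 2 * c * (|y ℓ' - y' ℓ'| * y (ℓ - ℓ')) ≤
        2 * c * (N * S) := by
      have := conv_sum_le m (fun i => |y i - y' i|) y (fun i _ => abs_nonneg _) hy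
      calc ∑ ℓ ∈ I, ∑ ℓ' ∈ Finset.Ico 1 ℓ, 2 * c * (|y ℓ' - y' ℓ'| * y (ℓ - ℓ'))
          = 2 * c * ∑ ℓ ∈ I, ∑ ℓ' ∈ Finset.Ico 1 ℓ, |y ℓ' - y' ℓ'| * y (ℓ - ℓ') := by
            rw [Finset.mul_sum]
            exact Finset.sum_congr rfl fun ℓ _ => by rw [Finset.mul_sum]
        _ ≤ 2 * c * (N * S) := by
            refine mul_le_mul_of_nonneg_left ?_ (by positivity)
            rw [hN, hS, hI]
            simpa using this
    have c2 : ∑ ℓ ∈ I, ∑ ℓ' ∈ Finset.Ico 1 ℓ, 2 * c * (y' ℓ' * |y (ℓ - ℓ') - y' (ℓ - ℓ')|) ≤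
        2 * c * (S' * N) := by
      have := conv_sum_le m y' (fun i => |y i - y' i|) hy' (fun i _ => abs_nonneg _)
      calc ∑ ℓ ∈ I, ∑ ℓ' ∈ Finset.Ico 1 ℓ, 2 * c * (y' ℓ' * |y (ℓ - ℓ') - y' (ℓ - ℓ')|)
          = 2 * c * ∑ ℓ ∈ I, ∑ ℓ' ∈ Finset.Ico 1 ℓ, y' ℓ' * |y (ℓ - ℓ') - y' (ℓ - ℓ')| := by
            rw [Finset.mul_sum]
            exact Finset.sum_congr rfl fun ℓ _ => by rw [Finset.mul_sum]
        _ ≤ 2 * c * (S' * N) := by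
            refine mul_le_mul_of_nonneg_left ?_ (by positivity)
            rw [hN, hS', hI]
            simpa using this
    linarith
  -- sum of B'
  have hB'sum : ∑ ℓ ∈ I, convB a y' ℓ ≤ 2 * c * (S' * S') := by
    have step : ∀ ℓ ∈ I, convB a y' ℓ ≤
        ∑ ℓ' ∈ Finset.Ico 1 ℓ, (2 * c * y' ℓ') * y' (ℓ - ℓ') := by
      intro ℓ hℓ
      refine Finset.sum_le_sum fun ℓ' hℓ' => ?_
      obtain ⟨h1, h2⟩ := hsub ℓ hℓ ℓ' hℓ'
      have : a ℓ' * y' ℓ' ≤ 2 * c * y' ℓ' :=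
        mul_le_mul_of_nonneg_right (ha2 ℓ') (hy' _ h1)
      exact mul_le_mul_of_nonneg_right this (hy' _ h2)
    refine (Finset.sum_le_sum step).trans ?_
    have := conv_sum_le m (fun i => 2 * c * y' i) y'
      (fun i hi => mul_nonneg (by positivity) (hy' i hi)) hy'
    have this2 : (∑ ℓ ∈ Finset.Icc 1 m, ∑ ℓ' ∈ Finset.Ico 1 ℓ,
        2 * c * y' ℓ' * y' (ℓ - ℓ')) ≤
        (∑ i ∈ Finset.Icc 1 m, 2 * c * y' i) * ∑ j ∈ Finset.Icc 1 m, y' j := by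
      simpa using this
    rw [hI]
    refine this2.trans (le_of_eq ?_)
    rw [← Finset.mul_sum]
    rw [hI] at hS'
    rw [← hS']
    ring
  -- pointwise bound
  set P2 : ℕ → ℝ := fun ℓ => (|A - A'| / ε) * y ℓ + ((A' + rt) / ε) * |y ℓ - y' ℓ| +
      ((A' + rt) * N / ε ^ 2) * y' ℓ with hP2
  set P3 : ℕ → ℝ := fun ℓ => (1 / ε) * |convB a y ℓ - convB a y' ℓ| +
      (N / ε ^ 2) * convB a y' ℓ with hP3
  clear_value P2 P3
  have hpt : ∀ ℓ ∈ I,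
      |(-(a ℓ) * y ℓ - (A + rt) / (S + r) * y ℓ + convB a y ℓ / (S + r))
        - (-(a ℓ) * y' ℓ - (A' + rt) / (S' + r) * y' ℓ + convB a y' ℓ / (S' + r))| ≤
      a ℓ * |y ℓ - y' ℓ| + P2 ℓ + P3 ℓ := by
    intro ℓ hℓ
    have hy0 := hy ℓ hℓ
    have hy'0 := hy' ℓ hℓ
    have hArt : 0 ≤ A' + rt := by linarith
    have e : (-(a ℓ) * y ℓ - (A + rt) / (S + r) * y ℓ + convB a y ℓ / (S + r))
        - (-(a ℓ) * y' ℓ - (A' + rt) / (S' + r) * y' ℓ + convB a y' ℓ / (S' + r)) =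
        (-(a ℓ) * (y ℓ - y' ℓ))
        + (((A' + rt) * y' ℓ) / (S' + r) - ((A + rt) * y ℓ) / (S + r))
        + (convB a y ℓ / (S + r) - convB a y' ℓ / (S' + r)) := by
      ring
    rw [e]
    refine (abs_add_le _ _).trans (add_le_add ((abs_add_le _ _).trans (add_le_add ?_ ?_)) ?_)
    · rw [abs_mul, abs_neg, abs_of_nonneg (ha0 ℓ)]
    · -- |u' - u| ≤ P2 ℓ
      rw [abs_sub_comm]
      refine (div_diff_bound hε hDn hDn').trans ?_
      have hd : (S + r) - (S' + r) = S - S' := by ring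
      rw [hd, abs_mul, abs_of_nonneg hArt, abs_of_nonneg hy'0]
      have hnum : |(A + rt) * y ℓ - (A' + rt) * y' ℓ| ≤
          |A - A'| * y ℓ + (A' + rt) * |y ℓ - y' ℓ| := by
        have e2 : (A + rt) * y ℓ - (A' + rt) * y' ℓ =
            (A - A') * y ℓ + (A' + rt) * (y ℓ - y' ℓ) := by ring
        rw [e2]
        refine (abs_add_le _ _).trans ?_
        rw [abs_mul, abs_mul, abs_of_nonneg hy0, abs_of_nonneg hArt]
      have t1 : |(A + rt) * y ℓ - (A' + rt) * y' ℓ| / ε ≤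
          (|A - A'| * y ℓ + (A' + rt) * |y ℓ - y' ℓ|) / ε :=
        (div_le_div_iff_of_pos_right hε).mpr hnum
      have t2 : (A' + rt) * y' ℓ * |S - S'| / ε ^ 2 ≤
          (A' + rt) * y' ℓ * N / ε ^ 2 :=
        (div_le_div_iff_of_pos_right (by positivity)).mpr
          (mul_le_mul_of_nonneg_left hSd (mul_nonneg hArt hy'0))
      have e3 : (|A - A'| * y ℓ + (A' + rt) * |y ℓ - y' ℓ|) / ε +
          (A' + rt) * y' ℓ * N / ε ^ 2 = P2 ℓ := by
        rw [hP2]; ring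
      linarith
    · -- |v - v'| ≤ P3 ℓ
      refine (div_diff_bound hε hDn hDn').trans ?_
      have hd : (S + r) - (S' + r) = S - S' := by ring
      rw [hd, abs_of_nonneg (hB'0 ℓ hℓ)]
      have t2 : convB a y' ℓ * |S - S'| / ε ^ 2 ≤ convB a y' ℓ * N / ε ^ 2 :=
        (div_le_div_iff_of_pos_right (by positivity)).mpr
          (mul_le_mul_of_nonneg_left hSd (hB'0 ℓ hℓ))
      have e3 : |convB a y ℓ - convB a y' ℓ| / ε + convB a y' ℓ * N / ε ^ 2 = P3 ℓ := by
        rw [hP3]; ring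
      linarith
  -- assemble
  calc ∑ ℓ ∈ I, |(-(a ℓ) * y ℓ - (A + rt) / (S + r) * y ℓ + convB a y ℓ / (S + r))
        - (-(a ℓ) * y' ℓ - (A' + rt) / (S' + r) * y' ℓ + convB a y' ℓ / (S' + r))|
      ≤ ∑ ℓ ∈ I, (a ℓ * |y ℓ - y' ℓ| + P2 ℓ + P3 ℓ) := Finset.sum_le_sum hpt
    _ = (∑ ℓ ∈ I, a ℓ * |y ℓ - y' ℓ|) + (∑ ℓ ∈ I, P2 ℓ) + (∑ ℓ ∈ I, P3 ℓ) := by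
        rw [Finset.sum_add_distrib, Finset.sum_add_distrib]
    _ ≤ (2 * c + 18 * c / ε + 20 * c / ε ^ 2) * N := by
        have s1 : ∑ ℓ ∈ I, a ℓ * |y ℓ - y' ℓ| ≤ 2 * (c * N) := by
          have : ∑ ℓ ∈ I, a ℓ * |y ℓ - y' ℓ| ≤ ∑ ℓ ∈ I, 2 * c * |y ℓ - y' ℓ| :=
            Finset.sum_le_sum fun ℓ _ =>
              mul_le_mul_of_nonneg_right (ha2 ℓ) (abs_nonneg _)
          rw [← Finset.mul_sum, ← hN] at this
          linarith
        have s2 : ∑ ℓ ∈ I, P2 ℓ =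
            (|A - A'| / ε) * S + ((A' + rt) / ε) * N + ((A' + rt) * N / ε ^ 2) * S' := by
          simp only [hP2, Finset.sum_add_distrib, ← Finset.mul_sum, ← hS, ← hS', ← hN]
        have s3 : ∑ ℓ ∈ I, P3 ℓ =
            (1 / ε) * (∑ ℓ ∈ I, |convB a y ℓ - convB a y' ℓ|) +
            (N / ε ^ 2) * (∑ ℓ ∈ I, convB a y' ℓ) := by
          simp only [hP3, Finset.sum_add_distrib, ← Finset.mul_sum]
        have hArt : 0 ≤ A' + rt := by linarith
        have hArt6 : A' + rt ≤ 6 * c := by linarith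
        -- piecewise bounds
        have b2a : (|A - A'| / ε) * S ≤ 4 * (c * (N / ε)) := by
          have h1 : |A - A'| * S ≤ 4 * c * N := by nlinarith [abs_nonneg (A - A')]
          calc (|A - A'| / ε) * S = (|A - A'| * S) / ε := by ring
            _ ≤ (4 * c * N) / ε := (div_le_div_iff_of_pos_right hε).mpr h1
            _ = 4 * (c * (N / ε)) := by ring
        have b2b : ((A' + rt) / ε) * N ≤ 6 * (c * (N / ε)) := by
          have h1 : (A' + rt) * N ≤ 6 * c * N := by nlinarith
          calc ((A' + rt) / ε) * N = ((A' + rt) * N) / ε := by ring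
            _ ≤ (6 * c * N) / ε := (div_le_div_iff_of_pos_right hε).mpr h1
            _ = 6 * (c * (N / ε)) := by ring
        have b2c : ((A' + rt) * N / ε ^ 2) * S' ≤ 12 * (c * (N / ε ^ 2)) := by
          have h1 : (A' + rt) * N * S' ≤ 12 * c * N := by
            nlinarith [mul_le_mul_of_nonneg_left hy'u (mul_nonneg hArt hN0),
              mul_le_mul_of_nonneg_right hArt6 hN0]
          calc ((A' + rt) * N / ε ^ 2) * S' = ((A' + rt) * N * S') / ε ^ 2 := by ring
            _ ≤ (12 * c * N) / ε ^ 2 := (div_le_div_iff_of_pos_right (by positivity)).mpr h1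
            _ = 12 * (c * (N / ε ^ 2)) := by ring
        have b3a : (1 / ε) * (∑ ℓ ∈ I, |convB a y ℓ - convB a y' ℓ|) ≤
            8 * (c * (N / ε)) := by
          have h1 : ∑ ℓ ∈ I, |convB a y ℓ - convB a y' ℓ| ≤ 8 * c * N := by
            nlinarith [hBd, mul_le_mul_of_nonneg_left hyu
                (mul_nonneg (by linarith : (0:ℝ) ≤ 2 * c) hN0),
              mul_le_mul_of_nonneg_left hy'u
                (mul_nonneg (by linarith : (0:ℝ) ≤ 2 * c) hN0)]
          calc (1 / ε) * (∑ ℓ ∈ I, |convB a y ℓ - convB a y' ℓ|) =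
              (∑ ℓ ∈ I, |convB a y ℓ - convB a y' ℓ|) / ε := by ring
            _ ≤ (8 * c * N) / ε := (div_le_div_iff_of_pos_right hε).mpr h1
            _ = 8 * (c * (N / ε)) := by ring
        have b3b : (N / ε ^ 2) * (∑ ℓ ∈ I, convB a y' ℓ) ≤ 8 * (c * (N / ε ^ 2)) := by
          have h0 : 0 ≤ ∑ ℓ ∈ I, convB a y' ℓ := Finset.sum_nonneg hB'0
          have h2 : ∑ ℓ ∈ I, convB a y' ℓ ≤ 8 * c := by
            nlinarith [hB'sum, mul_nonneg (mul_nonneg hc.le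
              (sub_nonneg.mpr hy'u)) (by linarith : (0:ℝ) ≤ 2 + S')]
          have h1 : N * (∑ ℓ ∈ I, convB a y' ℓ) ≤ 8 * c * N := by
            nlinarith [mul_le_mul_of_nonneg_left h2 hN0]
          calc (N / ε ^ 2) * (∑ ℓ ∈ I, convB a y' ℓ) =
              (N * (∑ ℓ ∈ I, convB a y' ℓ)) / ε ^ 2 := by ring
            _ ≤ (8 * c * N) / ε ^ 2 := (div_le_div_iff_of_pos_right (by positivity)).mpr h1
            _ = 8 * (c * (N / ε ^ 2)) := by ring
        have hE : (2 * c + 18 * c / ε + 20 * c / ε ^ 2) * N =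
            2 * (c * N) + 18 * (c * (N / ε)) + 20 * (c * (N / ε ^ 2)) := by ring
        rw [s2, s3, hE]
        linarith


/-- There is a constant `L > 0`, depending only on `c`, such that for all `m ≥ 1`,
`k > 0`, `r ≥ 0`, `r̃ ∈ [0, 2c]`, the map `Φ` is `L`-Lipschitz with respect to the
`ℓ¹` norm on the domain `D`. -/
theorem stmt10 (c : ℝ) (hc : 0 < c) :
    ∃ L : ℝ, 0 < L ∧
      ∀ (m : ℕ), 1 ≤ m → ∀ (k : ℝ), 0 < k → ∀ (r : ℝ), 0 ≤ r →
      ∀ rt ∈ Set.Icc (0 : ℝ) (2 * c),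
      ∀ y y' : ℕ → ℝ,
        (∀ ℓ ∈ Finset.Icc 1 m, 0 ≤ y ℓ) →
        (1 / 2) * Real.exp (-(4 * c)) ≤ (∑ ℓ ∈ Finset.Icc 1 m, y ℓ) →
        (∑ ℓ ∈ Finset.Icc 1 m, y ℓ) ≤ 2 →
        (∀ ℓ ∈ Finset.Icc 1 m, 0 ≤ y' ℓ) →
        (1 / 2) * Real.exp (-(4 * c)) ≤ (∑ ℓ ∈ Finset.Icc 1 m, y' ℓ) →
        (∑ ℓ ∈ Finset.Icc 1 m, y' ℓ) ≤ 2 →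
        (∑ ℓ ∈ Finset.Icc 1 m, |PhiMap c k r rt m y ℓ - PhiMap c k r rt m y' ℓ|) ≤
          L * ∑ ℓ ∈ Finset.Icc 1 m, |y ℓ - y' ℓ| := by
  set ε := (1 / 2) * Real.exp (-(4 * c)) with hεdef
  have hε : 0 < ε := by positivity
  refine ⟨2 * c + 18 * c / ε + 20 * c / ε ^ 2, ?_, ?_⟩
  · have h1 : 0 < 18 * c / ε := div_pos (by linarith) hε
    have h2 : 0 < 20 * c / ε ^ 2 := div_pos (by linarith) (by positivity)
    linarith
  · intro m hm k hk r hr rt hrt y y' hy hyl hyu hy' hy'l hy'u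
    obtain ⟨hrt0, hrt2⟩ := hrt
    have h := key c ε hc hε m (fun ℓ => min ((ℓ : ℝ) / k) (2 * c))
      (fun ℓ => le_min (div_nonneg (Nat.cast_nonneg ℓ) hk.le) (by linarith))
      (fun ℓ => min_le_right _ _) r rt hr hrt0 hrt2 y y'
      hy hyl hyu hy' hy'l hy'u
    simpa [PhiMap, convB] using h
end

section
/- Fix η > 0 and t ∈ [0,1). For all g₁, g₂ ∈ 𝓛_η, ∫_ℝ |A₂(g₁)(x) − A₂(g₂)(x)| dx ≤ ((3η + 1)/(1 − t))·∫_ℝ |g₁(x) − g₂(x)| dx; in particular A₂ is Lipschitz on 𝓛_η with respect to the L¹ norm with a constant depending only on η and t. -/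
open MeasureTheory Set Function
open scoped Convolution

/-- The class `𝓛_η`: measurable functions `g : ℝ → [0,1]` vanishing outside `[0, η]`
with `∫₀^η g ≤ 1` and `∫₀^η x·g(x) dx ≤ 1`. -/
def memLeta (η : ℝ) (g : ℝ → ℝ) : Prop :=
  Measurable g ∧ (∀ x, 0 ≤ g x ∧ g x ≤ 1) ∧
  (∀ x, x ∉ Set.Icc (0 : ℝ) η → g x = 0) ∧
  (∫ x in (0 : ℝ)..η, g x) ≤ 1 ∧ (∫ x in (0 : ℝ)..η, x * g x) ≤ 1

/-- The operator `A₂` from the metric-matching PDE (at time `t`). -/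
noncomputable def A2op (t : ℝ) (g : ℝ → ℝ) (x : ℝ) : ℝ :=
  if x < 0 then 0
  else
    -(x + 1 / (1 - t)) * g x
      + (1 / (1 - t)) * ∫ x' in (0 : ℝ)..x, x' * g x' * g (x - x')

/-!
With `c = 1/(1-t)` and `Δ = g₁ - g₂`, which is supported in `[0, η]`, the local part of
`A₂(g₁) - A₂(g₂)` is `-(x + c) Δ(x)`, bounded by `(η + c)|Δ(x)|`. The integrand of the quadratic
part splits as `y Δ(y) g₁(x-y) + y g₂(y) Δ(x-y)`; since `y ≤ η` wherever it does not vanish, the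
quadratic part is bounded pointwise by `c η ((|Δ| ⋆ g₁)(x) + (g₂ ⋆ |Δ|)(x))`, and each convolution
has integral at most `‖Δ‖₁` because `∫ gᵢ ≤ 1`. Altogether the constant is `η + c + 2cη`, which is
at most `(3η + 1) c` because `c ≥ 1`.
-/

lemma abs_mul_le_of_support_subset {f : ℝ → ℝ} {η : ℝ} (hf : support f ⊆ Icc 0 η) (x : ℝ) :
    |x * f x| ≤ η * |f x| := by
  by_cases hx : x ∈ support f
  · rw [abs_mul, abs_of_nonneg (hf hx).1]
    exact mul_le_mul_of_nonneg_right (hf hx).2 (abs_nonneg _)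
  · simp [notMem_support.1 hx]

lemma intervalIntegral_le_integral_of_nonneg {f : ℝ → ℝ} (hf : Integrable f) (hf0 : 0 ≤ f)
    {a b : ℝ} (hab : a ≤ b) : ∫ x in a..b, f x ≤ ∫ x, f x := by
  rw [intervalIntegral.integral_of_le hab]
  exact setIntegral_le_integral hf (ae_of_all _ hf0)

lemma MeasureTheory.Integrable.mul_comp_sub_of_abs_le {f g : ℝ → ℝ} (hf : Integrable f)
    (hg : Measurable g) {C : ℝ} (hC : ∀ y, |g y| ≤ C) (x : ℝ) :
    Integrable fun y => f y * g (x - y) :=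
  hf.mul_bdd (hg.comp (measurable_const.sub measurable_id)).aestronglyMeasurable
    (ae_of_all _ fun y => hC (x - y))

namespace memLeta

variable {η : ℝ} {g g₁ g₂ : ℝ → ℝ}

lemma measurable (hg : memLeta η g) : Measurable g := hg.1

lemma nonneg (hg : memLeta η g) (x : ℝ) : 0 ≤ g x := (hg.2.1 x).1

lemma le_one (hg : memLeta η g) (x : ℝ) : g x ≤ 1 := (hg.2.1 x).2

lemma abs_le_one (hg : memLeta η g) (x : ℝ) : |g x| ≤ 1 := by
  rw [abs_of_nonneg (hg.nonneg x)]; exact hg.le_one x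

lemma support_subset (hg : memLeta η g) : support g ⊆ Icc 0 η :=
  support_subset_iff'.2 hg.2.2.1

lemma abs_sub_le_one (h₁ : memLeta η g₁) (h₂ : memLeta η g₂) (x : ℝ) :
    |g₁ x - g₂ x| ≤ 1 :=
  abs_sub_le_of_nonneg_of_le (h₁.nonneg x) (h₁.le_one x) (h₂.nonneg x) (h₂.le_one x)

lemma support_sub_subset (h₁ : memLeta η g₁) (h₂ : memLeta η g₂) :
    support (g₁ - g₂) ⊆ Icc 0 η :=
  (support_sub g₁ g₂).trans (union_subset h₁.support_subset h₂.support_subset)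

lemma integrable (hg : memLeta η g) : Integrable g := by
  rw [← integrableOn_iff_integrable_of_support_subset hg.support_subset]
  exact Measure.integrableOn_of_bounded measure_Icc_lt_top.ne hg.measurable.aestronglyMeasurable
    (ae_of_all _ hg.abs_le_one)

lemma integral_le_one (hη : 0 ≤ η) (hg : memLeta η g) : ∫ x, g x ≤ 1 := by
  rw [← setIntegral_eq_integral_of_forall_compl_eq_zero hg.2.2.1, integral_Icc_eq_integral_Ioc,
    ← intervalIntegral.integral_of_le hη]
  exact hg.2.2.2.1

lemma abs_id_mul_le (hg : memLeta η g) (x : ℝ) : |x * g x| ≤ η * g x := by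
  simpa [abs_of_nonneg (hg.nonneg x)] using abs_mul_le_of_support_subset hg.support_subset x

lemma integrable_id_mul (hg : memLeta η g) : Integrable fun x => x * g x :=
  (hg.integrable.const_mul η).mono' (measurable_id.mul hg.measurable).aestronglyMeasurable
    (ae_of_all _ hg.abs_id_mul_le)

end memLeta

section Lipschitz

variable {η : ℝ} {g₁ g₂ : ℝ → ℝ}

lemma abs_A2op_integrand_sub_le (h₁ : memLeta η g₁) (h₂ : memLeta η g₂) (x y : ℝ) :
    |y * g₁ y * g₁ (x - y) - y * g₂ y * g₂ (x - y)| ≤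
      η * (|g₁ y - g₂ y| * g₁ (x - y) + g₂ y * |g₁ (x - y) - g₂ (x - y)|) := by
  have hΔ : |y * (g₁ y - g₂ y)| ≤ η * |g₁ y - g₂ y| :=
    abs_mul_le_of_support_subset (h₁.support_sub_subset h₂) y
  calc |y * g₁ y * g₁ (x - y) - y * g₂ y * g₂ (x - y)|
      = |y * (g₁ y - g₂ y) * g₁ (x - y) + y * g₂ y * (g₁ (x - y) - g₂ (x - y))| := by
        congr 1; ring
    _ ≤ |y * (g₁ y - g₂ y)| * g₁ (x - y) + |y * g₂ y| * |g₁ (x - y) - g₂ (x - y)| := by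
      refine (abs_add_le _ _).trans_eq ?_
      rw [abs_mul, abs_mul (y * g₂ y), abs_of_nonneg (h₁.nonneg _)]
    _ ≤ η * |g₁ y - g₂ y| * g₁ (x - y) + η * g₂ y * |g₁ (x - y) - g₂ (x - y)| := by
      gcongr
      · exact h₁.nonneg _
      · exact h₂.abs_id_mul_le y
    _ = η * (|g₁ y - g₂ y| * g₁ (x - y) + g₂ y * |g₁ (x - y) - g₂ (x - y)|) := by ring

lemma abs_A2op_integral_sub_le (hη : 0 ≤ η) (h₁ : memLeta η g₁)
    (h₂ : memLeta η g₂) {x : ℝ} (hx : 0 ≤ x) :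
    |(∫ y in 0..x, y * g₁ y * g₁ (x - y)) - ∫ y in 0..x, y * g₂ y * g₂ (x - y)| ≤
      η * ((|g₁ - g₂| ⋆ g₁) x + (g₂ ⋆ |g₁ - g₂|) x) := by
  have hw : ∀ {g}, memLeta η g → Integrable fun y => y * g y * g (x - y) := fun hg =>
    hg.integrable_id_mul.mul_comp_sub_of_abs_le hg.measurable hg.abs_le_one x
  have hu : Integrable fun y => |g₁ y - g₂ y| * g₁ (x - y) :=
    (h₁.integrable.sub h₂.integrable).abs.mul_comp_sub_of_abs_le h₁.measurable h₁.abs_le_one x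
  have hv : Integrable fun y => g₂ y * |g₁ (x - y) - g₂ (x - y)| :=
    h₂.integrable.mul_comp_sub_of_abs_le (h₁.measurable.sub h₂.measurable).abs
      (fun y => (abs_abs _).trans_le (h₁.abs_sub_le_one h₂ y)) x
  rw [← intervalIntegral.integral_sub (hw h₁).intervalIntegrable (hw h₂).intervalIntegrable]
  calc _ ≤ ∫ y in 0..x, |y * g₁ y * g₁ (x - y) - y * g₂ y * g₂ (x - y)| :=
        intervalIntegral.abs_integral_le_integral_abs hx
    _ ≤ ∫ y in 0..x, η * (|g₁ y - g₂ y| * g₁ (x - y) + g₂ y * |g₁ (x - y) - g₂ (x - y)|) :=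
        intervalIntegral.integral_mono_on hx ((hw h₁).sub (hw h₂)).abs.intervalIntegrable
          ((hu.add hv).const_mul η).intervalIntegrable
          fun y _ => abs_A2op_integrand_sub_le h₁ h₂ x y
    _ ≤ ∫ y, η * (|g₁ y - g₂ y| * g₁ (x - y) + g₂ y * |g₁ (x - y) - g₂ (x - y)|) :=
        intervalIntegral_le_integral_of_nonneg ((hu.add hv).const_mul η)
          (fun y => mul_nonneg hη (add_nonneg (mul_nonneg (abs_nonneg _) (h₁.nonneg _))
            (mul_nonneg (h₂.nonneg _) (abs_nonneg _)))) hx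
    _ = η * ((|g₁ - g₂| ⋆ g₁) x + (g₂ ⋆ |g₁ - g₂|) x) := by
        rw [integral_const_mul, integral_add hu hv]
        simp only [convolution_lsmul, smul_eq_mul, Pi.abs_apply, Pi.sub_apply]

lemma abs_A2op_sub_le (hη : 0 ≤ η) (h₁ : memLeta η g₁) (h₂ : memLeta η g₂) (t x : ℝ) :
    |A2op t g₁ x - A2op t g₂ x| ≤
      (η + |1 / (1 - t)|) * |g₁ x - g₂ x| +
        |1 / (1 - t)| * η * ((|g₁ - g₂| ⋆ g₁) x + (g₂ ⋆ |g₁ - g₂|) x) := by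
  set c := 1 / (1 - t)
  rcases lt_or_ge x 0 with hx | hx
  · have hF₁ : 0 ≤ (|g₁ - g₂| ⋆ g₁) x :=
      integral_nonneg fun y => mul_nonneg (abs_nonneg _) (h₁.nonneg _)
    have hF₂ : 0 ≤ (g₂ ⋆ |g₁ - g₂|) x :=
      integral_nonneg fun y => mul_nonneg (h₂.nonneg _) (abs_nonneg _)
    simp only [A2op, if_pos hx, sub_zero, abs_zero]
    positivity
  · have hΔ : |x * (g₁ x - g₂ x)| ≤ η * |g₁ x - g₂ x| :=
      abs_mul_le_of_support_subset (h₁.support_sub_subset h₂) x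
    simp only [A2op, if_neg hx.not_gt]
    set I₁ := ∫ y in 0..x, y * g₁ y * g₁ (x - y)
    set I₂ := ∫ y in 0..x, y * g₂ y * g₂ (x - y)
    calc _ = |-(x * (g₁ x - g₂ x)) + -c * (g₁ x - g₂ x) + c * (I₁ - I₂)| := by
          congr 1; ring
      _ ≤ |x * (g₁ x - g₂ x)| + |c| * |g₁ x - g₂ x| + |c| * |I₁ - I₂| :=
          (abs_add_three _ _ _).trans_eq (by simp only [abs_neg, abs_mul])
      _ ≤ η * |g₁ x - g₂ x| + |c| * |g₁ x - g₂ x| +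
            |c| * (η * ((|g₁ - g₂| ⋆ g₁) x + (g₂ ⋆ |g₁ - g₂|) x)) := by
          gcongr
          exact abs_A2op_integral_sub_le hη h₁ h₂ hx
      _ = _ := by ring

lemma integral_abs_A2op_sub_le (hη : 0 ≤ η) (h₁ : memLeta η g₁) (h₂ : memLeta η g₂) (t : ℝ) :
    ∫ x, |A2op t g₁ x - A2op t g₂ x| ≤
      (η + |1 / (1 - t)| + 2 * |1 / (1 - t)| * η) * ∫ x, |g₁ x - g₂ x| := by
  set c := 1 / (1 - t)
  have hΔ : Integrable |g₁ - g₂| := (h₁.integrable.sub h₂.integrable).abs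
  have hF₁ : Integrable (|g₁ - g₂| ⋆ g₁) := hΔ.integrable_convolution _ h₁.integrable
  have hF₂ : Integrable (g₂ ⋆ |g₁ - g₂|) := h₂.integrable.integrable_convolution _ hΔ
  have hΔc : Integrable fun x => (η + |c|) * |g₁ x - g₂ x| := hΔ.const_mul _
  have hFc : Integrable fun x => |c| * η * ((|g₁ - g₂| ⋆ g₁) x + (g₂ ⋆ |g₁ - g₂|) x) :=
    (hF₁.add hF₂).const_mul _
  set N := ∫ x, |g₁ x - g₂ x|
  have hmass : N * (∫ x, g₁ x) + (∫ x, g₂ x) * N ≤ 2 * N := by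
    have hN : 0 ≤ N := integral_nonneg fun _ => abs_nonneg _
    nlinarith [h₁.integral_le_one hη, h₂.integral_le_one hη]
  calc _ ≤ ∫ x, ((η + |c|) * |g₁ x - g₂ x| +
          |c| * η * ((|g₁ - g₂| ⋆ g₁) x + (g₂ ⋆ |g₁ - g₂|) x)) :=
        integral_mono_of_nonneg (ae_of_all _ fun _ => abs_nonneg _) (hΔc.add hFc)
          (ae_of_all _ (abs_A2op_sub_le hη h₁ h₂ t))
    _ = (η + |c|) * N + |c| * η * (N * (∫ x, g₁ x) + (∫ x, g₂ x) * N) := by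
        rw [integral_add hΔc hFc, integral_const_mul,
          integral_const_mul, integral_add hF₁ hF₂, integral_convolution _ hΔ h₁.integrable,
          integral_convolution _ h₂.integrable hΔ]
        simp only [ContinuousLinearMap.lsmul_apply, smul_eq_mul, Pi.abs_apply, Pi.sub_apply, N]
    _ ≤ (η + |c|) * N + |c| * η * (2 * N) := by gcongr
    _ = (η + |c| + 2 * |c| * η) * N := by ring

end Lipschitz

/-- `A₂` is Lipschitz on `𝓛_η` for the `L¹` norm with constant `(3η+1)/(1−t)`. -/
theorem stmt12 (η : ℝ) (hη : 0 < η) (t : ℝ) (ht : t ∈ Set.Ico (0 : ℝ) 1) :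
    ∀ g₁, memLeta η g₁ → ∀ g₂, memLeta η g₂ →
      (∫ x, |A2op t g₁ x - A2op t g₂ x|) ≤
        ((3 * η + 1) / (1 - t)) * ∫ x, |g₁ x - g₂ x| := by
  intro g₁ h₁ g₂ h₂
  have hc : 1 ≤ 1 / (1 - t) := by
    rw [le_div_iff₀ (by linarith [ht.2])]
    linarith [ht.1]
  refine (integral_abs_A2op_sub_le hη.le h₁ h₂ t).trans
    (mul_le_mul_of_nonneg_right ?_ (integral_nonneg fun _ => abs_nonneg _))
  rw [abs_of_pos (by linarith), div_eq_mul_one_div (3 * η + 1)]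
  linarith [mul_le_mul_of_nonneg_left hc hη.le]
end

section
/- Let a > 0 and b, c ≥ 0 be real numbers, let m be a natural number, and let x : ℕ → ℝ be such that x_j < c + Σ_{i=0}^{j−1} (a·x_i + b) for every 0 ≤ j ≤ m. Then x_m < (c + b·min{m, 1/a})·e^{a·m}. -/
/-- A discrete version of Gronwall's inequality: if
`x_j < c + Σ_{i<j} (a·x_i + b)` for all `j ≤ m`, then
`x_m < (c + b·min(m, 1/a))·e^{a·m}`. -/
theorem stmt17 (a b c : ℝ) (ha : 0 < a) (hb : 0 ≤ b) (hc : 0 ≤ c)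
    (m : ℕ) (x : ℕ → ℝ)
    (h : ∀ j ≤ m, x j < c + ∑ i ∈ Finset.range j, (a * x i + b)) :
    x m < (c + b * min (m : ℝ) (1 / a)) * Real.exp (a * m) := by
  set S : ℕ → ℝ := fun j => c + ∑ i ∈ Finset.range j, (a * x i + b) with hS
  have key : ∀ j, j ≤ m → S j ≤ c * (1 + a) ^ j + b * ∑ k ∈ Finset.range j, (1 + a) ^ k := by
    intro j
    induction j with
    | zero => simp [hS]
    | succ n ih =>
      intro hj
      have hn : n ≤ m := Nat.le_of_succ_le hj
      have ihn := ih hn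
      have hx : x n < S n := h n hn
      have hSn : S (n + 1) = S n + (a * x n + b) := by
        simp [hS, Finset.sum_range_succ]; ring
      have hgeom : ∑ k ∈ Finset.range (n + 1), (1 + a) ^ k
          = (1 + a) * ∑ k ∈ Finset.range n, (1 + a) ^ k + 1 := by
        rw [Finset.sum_range_succ']
        rw [Finset.mul_sum]
        simp [pow_succ, mul_comm]
      have h1 : S (n + 1) ≤ (1 + a) * S n + b := by
        rw [hSn]; nlinarith [hx]
      calc S (n + 1) ≤ (1 + a) * S n + b := h1
        _ ≤ (1 + a) * (c * (1 + a) ^ n + b * ∑ k ∈ Finset.range n, (1 + a) ^ k) + b := by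
            nlinarith [ihn]
        _ = c * (1 + a) ^ (n + 1) + b * ∑ k ∈ Finset.range (n + 1), (1 + a) ^ k := by
            rw [hgeom]; ring
  have hxm : x m < S m := h m le_rfl
  have hkey := key m le_rfl
  -- bound the geometric sum by min(m, 1/a) * (1+a)^m
  have ha1 : (0:ℝ) ≤ 1 + a := by linarith
  have hsum1 : ∑ k ∈ Finset.range m, (1 + a) ^ k ≤ (m : ℝ) * (1 + a) ^ m := by
    calc ∑ k ∈ Finset.range m, (1 + a) ^ k
        ≤ ∑ k ∈ Finset.range m, (1 + a) ^ m := by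
          apply Finset.sum_le_sum
          intro k hk
          exact pow_le_pow_right₀ (by linarith) (le_of_lt (Finset.mem_range.mp hk))
      _ = (m : ℝ) * (1 + a) ^ m := by
          rw [Finset.sum_const, Finset.card_range, nsmul_eq_mul]
  have hsum2 : ∑ k ∈ Finset.range m, (1 + a) ^ k ≤ (1 / a) * (1 + a) ^ m := by
    have hne : (1 + a : ℝ) ≠ 1 := by intro hh; nlinarith
    rw [geom_sum_eq hne]
    have : (1 + a : ℝ) - 1 = a := by ring
    rw [this, div_le_iff₀ ha]
    have hpow : (0:ℝ) < (1 + a) ^ m := pow_pos (by linarith) m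
    have heq : 1 / a * (1 + a) ^ m * a = (1 + a) ^ m := by field_simp
    linarith
  have hsum : ∑ k ∈ Finset.range m, (1 + a) ^ k ≤ min (m : ℝ) (1 / a) * (1 + a) ^ m := by
    rcases le_total (m : ℝ) (1 / a) with hmin | hmin
    · rw [min_eq_left hmin]; exact hsum1
    · rw [min_eq_right hmin]; exact hsum2
  have hmin0 : 0 ≤ min (m : ℝ) (1 / a) := le_min (Nat.cast_nonneg m) (by positivity)
  have hstep : S m ≤ (c + b * min (m : ℝ) (1 / a)) * (1 + a) ^ m := by
    have := mul_le_mul_of_nonneg_left hsum hb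
    calc S m ≤ c * (1 + a) ^ m + b * ∑ k ∈ Finset.range m, (1 + a) ^ k := hkey
      _ ≤ c * (1 + a) ^ m + b * (min (m : ℝ) (1 / a) * (1 + a) ^ m) := by linarith
      _ = (c + b * min (m : ℝ) (1 / a)) * (1 + a) ^ m := by ring
  have hexp : (1 + a) ^ m ≤ Real.exp (a * m) := by
    have h1 : (1 + a) ≤ Real.exp a := by
      have := Real.add_one_le_exp a; linarith
    calc (1 + a) ^ m ≤ (Real.exp a) ^ m := pow_le_pow_left₀ ha1 h1 m
      _ = Real.exp (a * m) := by
          rw [← Real.exp_nat_mul, mul_comm]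
  have hcoef : 0 ≤ c + b * min (m : ℝ) (1 / a) := by positivity
  calc x m < S m := hxm
    _ ≤ (c + b * min (m : ℝ) (1 / a)) * (1 + a) ^ m := hstep
    _ ≤ (c + b * min (m : ℝ) (1 / a)) * Real.exp (a * m) :=
        mul_le_mul_of_nonneg_left hexp hcoef
end
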